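/- Let k ≥ 1 be an integer and let h be an integer with 0 ≤ h ≤ k−1. Then the function y : ℝ → ℝ, y(x) = x^{2h}, satisfies ∑_{ℓ=1}^{k} a_ℓ^{(k)} · x^{ℓ−1} · y^{(ℓ)}(x) = 0 for every x ∈ ℝ, where y^{(ℓ)} denotes the ℓ-th derivative of y. -/

import Mathlib

/-- The coefficients `a_ℓ^{(k)}` from Proposition 4.2 of the paper. -/
noncomputable def coeffA (k ℓ : ℕ) : ℚ :=
  if ℓ = 0 then 0
  else (-2 : ℚ) ^ ((ℓ : ℤ) - (k : ℤ)) * (Nat.factorial (2 * k - ℓ - 1)) /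
    ((Nat.factorial (ℓ - 1)) * (Nat.factorial (k - ℓ)))

lemma coeffA_rec (k ℓ : ℕ) (h1 : 1 ≤ ℓ) (h2 : ℓ ≤ k) :
    coeffA (k + 1) ℓ = coeffA k (ℓ - 1) - ((2 * k : ℚ) - ℓ) * coeffA k ℓ := by
  obtain ⟨p, rfl⟩ : ∃ p, ℓ = p + 1 := ⟨ℓ - 1, by omega⟩
  obtain ⟨m, rfl⟩ : ∃ m, k = p + 1 + m := ⟨k - (p + 1), by omega⟩
  have e1 : ((p + 1 : ℕ) : ℤ) - ((p + 1 + m + 1 : ℕ) : ℤ) = -((m : ℤ) + 1) := by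
    push_cast; ring
  have e2 : ((p + 1 : ℕ) : ℤ) - ((p + 1 + m : ℕ) : ℤ) = -(m : ℤ) := by push_cast; ring
  have e3 : ((p : ℕ) : ℤ) - ((p + 1 + m : ℕ) : ℤ) = -((m : ℤ) + 1) := by push_cast; ring
  simp only [coeffA, Nat.add_sub_cancel, e1, e2, e3]
  rw [show 2 * (p + 1 + m + 1) - (p + 1) - 1 = p + 2 * m + 2 by omega,
      show 2 * (p + 1 + m) - (p + 1) - 1 = p + 2 * m by omega,
      show 2 * (p + 1 + m) - p - 1 = p + 2 * m + 1 by omega,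
      show p + 1 + m - p = m + 1 by omega,
      show p + 1 + m + 1 - (p + 1) = m + 1 by omega,
      show p + 1 + m - (p + 1) = m by omega]
  rw [zpow_neg, zpow_neg,
      show (m : ℤ) + 1 = ((m + 1 : ℕ) : ℤ) by push_cast; ring, zpow_natCast, zpow_natCast]
  have f2 : ((-2 : ℚ) ^ (m + 1)) ≠ 0 := pow_ne_zero _ (by norm_num)
  have f2' : ((-2 : ℚ) ^ m) ≠ 0 := pow_ne_zero _ (by norm_num)
  have hfact : ∀ n : ℕ, ((Nat.factorial n : ℚ)) ≠ 0 := fun n =>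
    Nat.cast_ne_zero.mpr (Nat.factorial_ne_zero n)
  rcases Nat.eq_zero_or_pos p with hp | hp
  · subst hp
    simp only [if_neg (Nat.succ_ne_zero 0), if_pos rfl]
    rw [show (0 : ℕ) + 2 * m + 2 = (2 * m + 1) + 1 by ring,
        show (0 : ℕ) + 2 * m = 2 * m by ring]
    rw [Nat.factorial_succ (2 * m + 1), Nat.factorial_succ m, pow_succ]
    field_simp
    rw [Nat.factorial_succ (2 * m)]
    push_cast
    ring
  · obtain ⟨q, rfl⟩ : ∃ q, p = q + 1 := ⟨p - 1, by omega⟩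
    simp only [if_neg (Nat.succ_ne_zero _), Nat.add_sub_cancel]
    rw [show q + 1 + 2 * m + 2 = (q + 1 + 2 * m + 1) + 1 by ring,
        Nat.factorial_succ (q + 1 + 2 * m + 1), Nat.factorial_succ (q + 1 + 2 * m),
        Nat.factorial_succ m, Nat.factorial_succ q, pow_succ]
    field_simp
    push_cast
    ring

lemma iteratedDeriv_pow' (n : ℕ) : ∀ ℓ : ℕ,
    iteratedDeriv ℓ (fun x : ℝ => x ^ n) = fun x => (n.descFactorial ℓ : ℝ) * x ^ (n - ℓ) := by
  intro ℓ
  induction ℓ with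
  | zero => simp
  | succ ℓ ih =>
    rw [iteratedDeriv_succ, ih]
    funext x
    rw [deriv_const_mul _ (differentiable_pow _ |>.differentiableAt), deriv_pow_field]
    rw [Nat.descFactorial_succ]
    push_cast
    ring_nf
    rw [show n - (1 + ℓ) = n - ℓ - 1 by omega]


lemma coeffA_zero (k : ℕ) : coeffA k 0 = 0 := by simp [coeffA]

lemma coeffA_self (k : ℕ) (hk : 1 ≤ k) : coeffA k k = 1 := by
  rw [coeffA, if_neg (by omega)]
  rw [show 2 * k - k - 1 = k - 1 by omega, Nat.sub_self, sub_self, zpow_zero]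
  simp [Nat.factorial_ne_zero]

lemma descFactorial_cast_succ (n j : ℕ) :
    (n.descFactorial (j + 1) : ℚ) = ((n : ℚ) - j) * n.descFactorial j := by
  rcases le_or_gt j n with hle | hlt
  · rw [Nat.descFactorial_succ]
    push_cast [Nat.cast_sub hle]
    ring
  · rw [Nat.descFactorial_eq_zero_iff_lt.mpr hlt,
      Nat.descFactorial_eq_zero_iff_lt.mpr (by omega)]
    simp

lemma key_sum (k : ℕ) (hk : 1 ≤ k) (n : ℕ) :
    ∑ ℓ ∈ Finset.Icc 1 k, coeffA k ℓ * (n.descFactorial ℓ : ℚ) =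
      ∏ j ∈ Finset.range k, ((n : ℚ) - 2 * j) := by
  have hIcc : ∀ m : ℕ, ∀ f : ℕ → ℚ, ∑ ℓ ∈ Finset.Icc 1 m, f ℓ =
      ∑ j ∈ Finset.range m, f (j + 1) := by
    intro m f
    rw [show Finset.Icc 1 m = Finset.Ico 1 (m + 1) by rfl, Finset.sum_Ico_eq_sum_range]
    simp [add_comm]
  induction k, hk using Nat.le_induction with
  | base =>
    simp [coeffA]
  | succ k hk ih =>
    rw [hIcc] at ih ⊢
    calc
      ∑ j ∈ Finset.range (k + 1), coeffA (k + 1) (j + 1) * (n.descFactorial (j + 1) : ℚ)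
          = ∑ j ∈ Finset.range k, coeffA (k + 1) (j + 1) * (n.descFactorial (j + 1) : ℚ)
            + coeffA k k * (n.descFactorial (k + 1) : ℚ) := by
            rw [Finset.sum_range_succ, coeffA_self (k + 1) (by omega), coeffA_self k hk]
      _ = (∑ j ∈ Finset.range k, coeffA k j * (n.descFactorial (j + 1) : ℚ)
            + coeffA k k * (n.descFactorial (k + 1) : ℚ))
          - ∑ j ∈ Finset.range k,
              ((2 * k : ℚ) - (j + 1)) * (coeffA k (j + 1) * (n.descFactorial (j + 1) : ℚ)) := by
            have hterm : ∀ j ∈ Finset.range k,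
                coeffA (k + 1) (j + 1) * (n.descFactorial (j + 1) : ℚ) =
                coeffA k j * (n.descFactorial (j + 1) : ℚ)
                  - ((2 * k : ℚ) - (j + 1)) * (coeffA k (j + 1) * (n.descFactorial (j + 1) : ℚ)) := by
              intro j hj
              rw [Finset.mem_range] at hj
              rw [coeffA_rec k (j + 1) (by omega) (by omega), Nat.add_sub_cancel]
              push_cast
              ring
            rw [Finset.sum_congr rfl hterm, Finset.sum_sub_distrib]
            ring
      _ = ∑ j ∈ Finset.range (k + 1), coeffA k j * (n.descFactorial (j + 1) : ℚ)
          - ∑ j ∈ Finset.range k,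
              ((2 * k : ℚ) - (j + 1)) * (coeffA k (j + 1) * (n.descFactorial (j + 1) : ℚ)) := by
            rw [Finset.sum_range_succ]
      _ = ∑ j ∈ Finset.range k,
              (((n : ℚ) - (j + 1)) - ((2 * k : ℚ) - (j + 1)))
                * (coeffA k (j + 1) * (n.descFactorial (j + 1) : ℚ)) := by
            rw [Finset.sum_range_succ']
            rw [coeffA_zero, zero_mul, add_zero, ← Finset.sum_sub_distrib]
            refine Finset.sum_congr rfl fun j hj => ?_
            rw [descFactorial_cast_succ n (j + 1)]
            push_cast
            ring
      _ = ((n : ℚ) - 2 * k) *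
            ∑ j ∈ Finset.range k, coeffA k (j + 1) * (n.descFactorial (j + 1) : ℚ) := by
            rw [Finset.mul_sum]
            refine Finset.sum_congr rfl fun j hj => ?_
            ring
      _ = ∏ j ∈ Finset.range (k + 1), ((n : ℚ) - 2 * j) := by
            rw [ih, Finset.prod_range_succ]
            ring

/-- From the proof of Lemma 4.3: the even monomials `x^{2h}`, `0 ≤ h ≤ k−1`, solve the
linear ODE `∑_{ℓ=1}^{k} a_ℓ^{(k)} x^{ℓ−1} y^{(ℓ)}(x) = 0`. -/
theorem even_monomials_solve_ode (k : ℕ) (hk : 1 ≤ k) (h : ℕ) (hh : h ≤ k - 1)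
    (y : ℝ → ℝ) (hy : ∀ x : ℝ, y x = x ^ (2 * h)) :
    ∀ x : ℝ,
      ∑ ℓ ∈ Finset.Icc 1 k,
        (coeffA k ℓ : ℝ) * x ^ (ℓ - 1) * iteratedDeriv ℓ y x = 0 := by
  intro x
  have hyfun : y = fun x : ℝ => x ^ (2 * h) := funext hy
  have hsum0 : (∑ ℓ ∈ Finset.Icc 1 k, coeffA k ℓ * ((2 * h).descFactorial ℓ : ℚ)) = 0 := by
    rw [key_sum k hk (2 * h)]
    refine Finset.prod_eq_zero (Finset.mem_range.mpr (show h < k by omega)) ?_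
    push_cast
    ring
  calc
    ∑ ℓ ∈ Finset.Icc 1 k, (coeffA k ℓ : ℝ) * x ^ (ℓ - 1) * iteratedDeriv ℓ y x
        = ∑ ℓ ∈ Finset.Icc 1 k,
            ((coeffA k ℓ * ((2 * h).descFactorial ℓ : ℚ) : ℚ) : ℝ) * x ^ (2 * h - 1) := by
          refine Finset.sum_congr rfl fun ℓ hℓ => ?_
          rw [Finset.mem_Icc] at hℓ
          rw [hyfun, iteratedDeriv_pow']
          rcases le_or_gt ℓ (2 * h) with hle | hlt
          · rw [show 2 * h - 1 = (ℓ - 1) + (2 * h - ℓ) by omega, pow_add]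
            push_cast
            ring
          · rw [Nat.descFactorial_eq_zero_iff_lt.mpr hlt]
            push_cast
            ring
    _ = ((∑ ℓ ∈ Finset.Icc 1 k, coeffA k ℓ * ((2 * h).descFactorial ℓ : ℚ) : ℚ) : ℝ)
          * x ^ (2 * h - 1) := by
          rw [← Finset.sum_mul]
          push_cast
          ring
    _ = 0 := by rw [hsum0]; simp
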